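/- arXiv:2306.08617 — 2 statements merged into one kernel-verified Lean document; each statement's English description precedes it below -/
import Mathlib

section
/- Let G be a connected weighted graph with Laplacian L and incidence matrix C. If f_{q/p}(Cy) lies in the image of C, then min{ ‖x‖_{G,p}^p : ⟨y, x⟩_L = 1 } = ‖y‖_{G,q}^{-p}, where 1/p + 1/q = 1 and p, q > 1. -/
/-!
Writing `z = Cy`, the constraint reads `∑ w_ℓ z_ℓ (Cx)_ℓ = 1`, so the weighted Hölder inequality
gives `1 ≤ ‖x‖_{G,p} ‖y‖_{G,q}`, i.e. `‖x‖_{G,p}^p ≥ ‖y‖_{G,q}^{-p}`. Equality holds in Hölder for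
`Cx` proportional to `f_{q/p}(z)`; this vector is `Cu` by hypothesis, so a suitable multiple of `u`
is feasible and attains the bound.
-/

open Matrix Finset

/-- `Mp` is the Moore–Penrose pseudoinverse of `M` (the four Penrose conditions). -/
def IsMoorePenrose {α β : Type*} [Fintype α] [Fintype β]
    (M : Matrix α β ℝ) (Mp : Matrix β α ℝ) : Prop :=
  M * Mp * M = M ∧ Mp * M * Mp = Mp ∧ (M * Mp)ᵀ = M * Mp ∧ (Mp * M)ᵀ = Mp * M

/-- An undirected weighted graph on `n` vertices with `m` edges, given by the two
endpoints `s ℓ ≠ t ℓ` and a positive weight `w ℓ` of each edge. -/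
structure WGraph (n m : ℕ) where
  s : Fin m → Fin n
  t : Fin m → Fin n
  w : Fin m → ℝ
  w_pos : ∀ ℓ, 0 < w ℓ
  s_ne_t : ∀ ℓ, s ℓ ≠ t ℓ

namespace WGraph

variable {n m : ℕ}

/-- The (signed) incidence matrix `C ∈ ℝ^{m×n}` of the graph. -/
def inc (G : WGraph n m) : Matrix (Fin m) (Fin n) ℝ :=
  fun ℓ i => if i = G.s ℓ then 1 else if i = G.t ℓ then -1 else 0

/-- The graph Laplacian `L = Cᵀ W C`. -/
def lap (G : WGraph n m) : Matrix (Fin n) (Fin n) ℝ :=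
  (G.inc)ᵀ * Matrix.diagonal G.w * G.inc

/-- Connectedness, expressed as: the kernel of the incidence matrix consists
exactly of the constant vectors. -/
def Connected (G : WGraph n m) : Prop :=
  ∀ x : Fin n → ℝ, G.inc.mulVec x = 0 → ∃ c : ℝ, ∀ i, x i = c

/-- The graph `p`-seminorm `‖x‖_{G,p} = (∑_ℓ w_ℓ |(Cx)_ℓ|^p)^{1/p}
  (= (∑_{ij} a_{ij} |x_i − x_j|^p)^{1/p})`. -/
noncomputable def gnorm (G : WGraph n m) (p : ℝ) (x : Fin n → ℝ) : ℝ :=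
  (∑ ℓ, G.w ℓ * |G.inc.mulVec x ℓ| ^ p) ^ (1 / p)

/-- The effective `p`-resistance
`r_{G,p}(i,j) = (min { S_{G,p}(x) : x_i − x_j = 1 })⁻¹`. -/
noncomputable def presistance (G : WGraph n m) (p : ℝ) (i j : Fin n) : ℝ :=
  (sInf {e : ℝ | ∃ x : Fin n → ℝ, x i - x j = 1 ∧
      e = ∑ ℓ, G.w ℓ * |G.inc.mulVec x ℓ| ^ p})⁻¹

end WGraph

/-- The (unweighted) ℓ^p norm on `ι → ℝ`. -/
noncomputable def pnorm {ι : Type*} [Fintype ι] (p : ℝ) (x : ι → ℝ) : ℝ :=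
  (∑ i, |x i| ^ p) ^ (1 / p)

/-- The operator `p`-norm `⦀M⦀_p = sup_{x ≠ 0} ‖Mx‖_p / ‖x‖_p`. -/
noncomputable def opNorm {ι κ : Type*} [Fintype ι] [Fintype κ] (p : ℝ)
    (M : Matrix ι κ ℝ) : ℝ :=
  sSup {t : ℝ | ∃ x : κ → ℝ, x ≠ 0 ∧ t = pnorm p (M.mulVec x) / pnorm p x}

namespace Real

theorem mul_sign_self (a : ℝ) : a * sign a = |a| := by
  rcases lt_trichotomy a 0 with ha | rfl | ha
  · rw [sign_of_neg ha, abs_of_neg ha, mul_neg_one]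
  · simp
  · rw [sign_of_pos ha, abs_of_pos ha, mul_one]

theorem mul_sign_mul_abs_rpow (a : ℝ) {θ : ℝ} (hθ : 1 + θ ≠ 0) :
    a * (sign a * |a| ^ θ) = |a| ^ (1 + θ) := by
  rw [← mul_assoc, mul_sign_self, rpow_add' (abs_nonneg a) hθ, rpow_one]

theorem abs_sign_mul_abs_rpow (a : ℝ) {θ : ℝ} (hθ : θ ≠ 0) :
    |sign a * |a| ^ θ| = |a| ^ θ := by
  rcases eq_or_ne a 0 with rfl | ha
  · simp [zero_rpow hθ]
  · rcases sign_apply_eq_of_ne_zero a ha with hs | hs <;>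
      simp [hs, abs_of_nonneg (rpow_nonneg (abs_nonneg a) θ)]

end Real

open Real

/-- The map `f_θ` of the paper. -/
noncomputable def signedRpow {ι : Type*} (θ : ℝ) (z : ι → ℝ) : ι → ℝ :=
  fun i => sign (z i) * |z i| ^ θ

noncomputable def weightedRpowSum {ι : Type*} [Fintype ι] (w : ι → ℝ) (p : ℝ) (v : ι → ℝ) : ℝ :=
  ∑ i, w i * |v i| ^ p

section WeightedHolder

variable {ι : Type*} [Fintype ι] {w : ι → ℝ} {p q : ℝ}

theorem weightedRpowSum_nonneg (hw : ∀ i, 0 ≤ w i) (p : ℝ) (v : ι → ℝ) :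
    0 ≤ weightedRpowSum w p v :=
  sum_nonneg fun i _ => mul_nonneg (hw i) (rpow_nonneg (abs_nonneg _) p)

theorem weightedRpowSum_pos (hw : ∀ i, 0 < w i) (p : ℝ) {v : ι → ℝ} (hv : v ≠ 0) :
    0 < weightedRpowSum w p v := by
  obtain ⟨i, hi⟩ := Function.ne_iff.mp hv
  exact sum_pos' (fun j _ => mul_nonneg (hw j).le (rpow_nonneg (abs_nonneg _) p))
    ⟨i, mem_univ i, mul_pos (hw i) (rpow_pos_of_pos (abs_pos.mpr hi) p)⟩

theorem weightedRpowSum_smul (p : ℝ) {c : ℝ} (hc : 0 ≤ c) (v : ι → ℝ) :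
    weightedRpowSum w p (c • v) = c ^ p * weightedRpowSum w p v := by
  simp only [weightedRpowSum, mul_sum, Pi.smul_apply, smul_eq_mul, abs_mul, abs_of_nonneg hc,
    mul_rpow hc (abs_nonneg _)]
  exact sum_congr rfl fun i _ => by ring

/-- Weighted Hölder: the unweighted one applied to `w^{1/p} v` and `w^{1/q} z`. -/
theorem sum_weight_mul_mul_le (hpq : p.HolderConjugate q) (hw : ∀ i, 0 ≤ w i) (z v : ι → ℝ) :
    ∑ i, w i * z i * v i ≤
      weightedRpowSum w p v ^ (1 / p) * weightedRpowSum w q z ^ (1 / q) := by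
  have hsplit : ∀ i, w i ^ (1 / p) * w i ^ (1 / q) = w i := fun i => by
    rw [← rpow_add' (hw i) (by simp [hpq.inv_add_inv_eq_one]), one_div, one_div,
      hpq.inv_add_inv_eq_one, rpow_one]
  have hpow : ∀ {r : ℝ}, r ≠ 0 → ∀ (a : ι → ℝ) i, |w i ^ (1 / r) * a i| ^ r = w i * |a i| ^ r :=
    fun hr a i => by
      rw [abs_mul, abs_of_nonneg (rpow_nonneg (hw i) _), mul_rpow (rpow_nonneg (hw i) _)
        (abs_nonneg _), one_div, rpow_inv_rpow (hw i) hr]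
  calc ∑ i, w i * z i * v i = ∑ i, (w i ^ (1 / p) * v i) * (w i ^ (1 / q) * z i) :=
        sum_congr rfl fun i _ => by rw [mul_mul_mul_comm, hsplit]; ring
    _ ≤ _ := inner_le_Lp_mul_Lq _ _ _ hpq
    _ = _ := by simp only [hpow hpq.ne_zero, hpow hpq.symm.ne_zero, weightedRpowSum]

theorem rpow_one_sub_le_weightedRpowSum (hpq : p.HolderConjugate q) (hw : ∀ i, 0 ≤ w i)
    {z v : ι → ℝ} (h : ∑ i, w i * z i * v i = 1) :
    weightedRpowSum w q z ^ (1 - p) ≤ weightedRpowSum w p v := by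
  set A := weightedRpowSum w p v
  set S := weightedRpowSum w q z
  have hA := weightedRpowSum_nonneg hw p v
  have hS := weightedRpowSum_nonneg hw q z
  have hone : 1 ≤ A * S ^ (p - 1) :=
    calc (1 : ℝ) = 1 ^ p := (one_rpow p).symm
      _ ≤ (A ^ (1 / p) * S ^ (1 / q)) ^ p :=
        rpow_le_rpow zero_le_one (h ▸ sum_weight_mul_mul_le hpq hw z v) hpq.nonneg
      _ = A * S ^ (p - 1) := by
        rw [mul_rpow (rpow_nonneg hA _) (rpow_nonneg hS _), one_div, rpow_inv_rpow hA hpq.ne_zero,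
          ← rpow_mul hS, one_div_mul_eq_div, hpq.div_conj_eq_sub_one]
  have hSpos : 0 < S ^ (p - 1) :=
    (rpow_nonneg hS _).lt_of_ne fun h0 => by rw [← h0, mul_zero] at hone; linarith
  rw [show 1 - p = -(p - 1) by ring, rpow_neg hS, inv_le_iff_one_le_mul₀ hSpos]
  exact hone

theorem sum_weight_mul_mul_signedRpow (hpq : p.HolderConjugate q) (z : ι → ℝ) :
    ∑ i, w i * z i * signedRpow (q / p) z i = weightedRpowSum w q z := by
  have hexp : 1 + q / p = q := by rw [hpq.symm.div_conj_eq_sub_one]; ring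
  refine sum_congr rfl fun i _ => ?_
  rw [signedRpow, mul_assoc, mul_sign_mul_abs_rpow _ (hexp.symm ▸ hpq.symm.ne_zero), hexp]

theorem weightedRpowSum_signedRpow (hpq : p.HolderConjugate q) (z : ι → ℝ) :
    weightedRpowSum w p (signedRpow (q / p) z) = weightedRpowSum w q z := by
  refine sum_congr rfl fun i _ => ?_
  rw [signedRpow, abs_sign_mul_abs_rpow _ (div_ne_zero hpq.symm.ne_zero hpq.ne_zero),
    ← rpow_mul (abs_nonneg _), div_mul_cancel₀ _ hpq.ne_zero]

end WeightedHolder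

namespace WGraph

variable {n m : ℕ}

theorem dotProduct_lap_mulVec (G : WGraph n m) (y x : Fin n → ℝ) :
    y ⬝ᵥ G.lap *ᵥ x = ∑ ℓ, G.w ℓ * (G.inc *ᵥ y) ℓ * (G.inc *ᵥ x) ℓ := by
  rw [lap, ← mulVec_mulVec, ← mulVec_mulVec, dotProduct_mulVec, vecMul_transpose]
  simp only [dotProduct, mulVec_diagonal]
  exact sum_congr rfl fun ℓ _ => by ring

theorem gnorm_eq (G : WGraph n m) (p : ℝ) (x : Fin n → ℝ) :
    G.gnorm p x = weightedRpowSum G.w p (G.inc *ᵥ x) ^ (1 / p) :=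
  rfl

theorem gnorm_rpow_self (G : WGraph n m) {p : ℝ} (hp : p ≠ 0) (x : Fin n → ℝ) :
    G.gnorm p x ^ p = weightedRpowSum G.w p (G.inc *ᵥ x) := by
  rw [gnorm_eq, one_div, rpow_inv_rpow (weightedRpowSum_nonneg (fun ℓ => (G.w_pos ℓ).le) p _) hp]

theorem gnorm_rpow_neg (G : WGraph n m) {p q : ℝ} (hpq : p.HolderConjugate q) (y : Fin n → ℝ) :
    G.gnorm q y ^ (-p) = weightedRpowSum G.w q (G.inc *ᵥ y) ^ (1 - p) := by
  rw [gnorm_eq, ← rpow_mul (weightedRpowSum_nonneg (fun ℓ => (G.w_pos ℓ).le) q _),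
    one_div_mul_eq_div, neg_div, hpq.div_conj_eq_sub_one, neg_sub]

end WGraph

theorem graph_holder_min_eq_of_image_general (n m : ℕ) (G : WGraph n m)
    (p q : ℝ) (hp : 1 < p) (hpq : 1 / p + 1 / q = 1)
    (y : Fin n → ℝ) (hy : G.inc.mulVec y ≠ 0)
    (himg : ∃ u : Fin n → ℝ, G.inc.mulVec u =
      fun ℓ => Real.sign (G.inc.mulVec y ℓ) * |G.inc.mulVec y ℓ| ^ (q / p)) :
    sInf {e : ℝ | ∃ x : Fin n → ℝ, y ⬝ᵥ G.lap.mulVec x = 1 ∧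
        e = (G.gnorm p x) ^ p} = (G.gnorm q y) ^ (-p) := by
  obtain ⟨u, hu⟩ := himg
  have hconj : p.HolderConjugate q := holderConjugate_iff.mpr ⟨hp, by simpa only [one_div] using hpq⟩
  have hw : ∀ ℓ, 0 ≤ G.w ℓ := fun ℓ => (G.w_pos ℓ).le
  set S := weightedRpowSum G.w q (G.inc *ᵥ y)
  have hS : 0 < S := weightedRpowSum_pos G.w_pos q hy
  have hCu : G.inc *ᵥ (S⁻¹ • u) = S⁻¹ • signedRpow (q / p) (G.inc *ᵥ y) := by
    rw [mulVec_smul, hu]; rfl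
  rw [G.gnorm_rpow_neg hconj]
  refine IsLeast.csInf_eq ⟨⟨S⁻¹ • u, ?_, ?_⟩, ?_⟩
  · simp only [G.dotProduct_lap_mulVec, hCu, Pi.smul_apply, smul_eq_mul, mul_left_comm _ S⁻¹,
      ← mul_sum, sum_weight_mul_mul_signedRpow hconj]
    exact inv_mul_cancel₀ hS.ne'
  · rw [G.gnorm_rpow_self hconj.ne_zero, hCu, weightedRpowSum_smul p (inv_nonneg.mpr hS.le),
      weightedRpowSum_signedRpow hconj, inv_rpow hS.le, ← rpow_neg hS.le, sub_eq_neg_add,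
      rpow_add_one hS.ne']
  · rintro _ ⟨x, hx, rfl⟩
    rw [G.gnorm_rpow_self hconj.ne_zero]
    exact rpow_one_sub_le_weightedRpowSum hconj hw (G.dotProduct_lap_mulVec y x ▸ hx)

/-- If `f_{q/p}(Cy)` lies in the image of the incidence matrix `C`, then
`min { ‖x‖_{G,p}^p : ⟨y, x⟩_L = 1 } = ‖y‖_{G,q}^{-p}`. -/
theorem graph_holder_min_eq_of_image (n m : ℕ) (G : WGraph n m) (hG : G.Connected)
    (p q : ℝ) (hp : 1 < p) (hq : 1 < q) (hpq : 1 / p + 1 / q = 1)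
    (y : Fin n → ℝ) (hy : G.inc.mulVec y ≠ 0)
    (himg : ∃ u : Fin n → ℝ, G.inc.mulVec u =
      fun ℓ => Real.sign (G.inc.mulVec y ℓ) * |G.inc.mulVec y ℓ| ^ (q / p)) :
    sInf {e : ℝ | ∃ x : Fin n → ℝ, y ⬝ᵥ G.lap.mulVec x = 1 ∧
        e = (G.gnorm p x) ^ p} = (G.gnorm q y) ^ (-p) :=
  graph_holder_min_eq_of_image_general n m G p q hp hpq y hy himg
end

section
/- If G is the complete unweighted graph on n vertices with incidence matrix C, then for every p ≥ 1 the operator p-norm of CC⁺ satisfies ⦀CC⁺⦀_p ≤ 4. -/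
/-!
Since `CᵀC = n • 1 - J` (the Laplacian of `K_n`) and every row of `C` sums to zero, we get
`C Cᵀ C = n • C`. Hence `Q = n⁻¹ • C Cᵀ` is symmetric, fixes the columns of `C` and has range
inside that of `C`; the Penrose conditions then force `CC⁺ = Q`. The rows of `C` have `ℓ¹`-norm `2`
and its columns `ℓ¹`-norm `n - 1`, so by submultiplicativity `‖Q‖_∞ = ‖Qᵀ‖_∞ ≤ 2`. Finally, the
weighted Hölder inequality (Schur's test) bounds the `ℓᵖ` operator norm of any matrix `M` by
`‖M‖_∞ ^ (1 - 1/p) * ‖Mᵀ‖_∞ ^ (1/p)`.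
-/


open Matrix Finset

/-- The incidence matrix of the complete unweighted graph `K_n`. -/
def completeInc (n : ℕ) : Matrix {e : Fin n × Fin n // e.1 < e.2} (Fin n) ℝ :=
  fun e k => if k = e.1.1 then 1 else if k = e.1.2 then -1 else 0

open scoped Matrix.Norms.Operator

theorem two_nsmul_sum_lt_eq_sum {α M : Type*} [Fintype α] [LinearOrder α] [AddCommMonoid M]
    (g : α → α → M) (hsymm : ∀ a b, g a b = g b a) (hdiag : ∀ a, g a a = 0) :
    2 • ∑ e : {e : α × α // e.1 < e.2}, g e.1.1 e.1.2 = ∑ a, ∑ b, g a b := by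
  have hsplit : ∀ a b, (if a < b then g a b else 0) + (if b < a then g b a else 0) = g a b := by
    intro a b
    rcases lt_trichotomy a b with h | rfl | h
    · simp [h, h.not_gt]
    · simp [hdiag]
    · simp [h, h.not_gt, hsymm a b]
  rw [← Finset.sum_subtype (Finset.univ.filter fun e : α × α => e.1 < e.2) (by simp)
    (fun e => g e.1 e.2), Finset.sum_filter, Fintype.sum_prod_type, two_nsmul]
  nth_rw 2 [Finset.sum_comm]
  simp only [← Finset.sum_add_distrib, hsplit]

theorem sum_sum_sub_mul_sub {α : Type*} [Fintype α] (u w : α → ℝ) :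
    ∑ a, ∑ b, (u a - u b) * (w a - w b)
      = 2 * (Fintype.card α * ∑ a, u a * w a - (∑ a, u a) * ∑ a, w a) := by
  simp only [sub_mul, mul_sub, Finset.sum_sub_distrib, Finset.sum_const, Finset.card_univ,
    ← Finset.mul_sum, ← Finset.sum_mul, nsmul_eq_mul]
  ring

theorem isSymm_mul_transpose {m k α : Type*} [Fintype k] [CommSemiring α] (A : Matrix m k α) :
    (A * Aᵀ).IsSymm := by
  rw [IsSymm, transpose_mul, transpose_transpose]

theorem IsMoorePenrose.mul_eq_of_isSymm {α β : Type*} [Fintype α] [Fintype β]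
    {M : Matrix α β ℝ} {Mp : Matrix β α ℝ} (hMp : IsMoorePenrose M Mp) {Q : Matrix α α ℝ}
    (hQ : Q.IsSymm) (hQM : Q * M = M) {X : Matrix β α ℝ} (hX : Q = M * X) :
    M * Mp = Q := by
  obtain ⟨hMMpM, -, hsymm, -⟩ := hMp
  have hQP : Q * (M * Mp) = M * Mp := by rw [← Matrix.mul_assoc, hQM]
  have hPQ : M * Mp * Q = Q := by rw [hX, ← Matrix.mul_assoc, hMMpM]
  calc M * Mp = (Q * (M * Mp))ᵀ := by rw [hQP, hsymm]
    _ = Q := by rw [transpose_mul, hsymm, hQ.eq, hPQ]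

section SchurTest

variable {ι κ : Type*} [Fintype ι] [Fintype κ]

theorem sum_abs_le_linfty_opNorm (A : Matrix ι κ ℝ) (i : ι) : ∑ j, |A i j| ≤ ‖A‖ := by
  rw [linfty_opNorm_def]
  have := Finset.le_sup (f := fun i => ∑ j, ‖A i j‖₊) (Finset.mem_univ i)
  simpa [← NNReal.coe_le_coe] using this

theorem linfty_opNorm_le_of_sum_abs_le {A : Matrix ι κ ℝ} {R : ℝ} (hR : 0 ≤ R)
    (h : ∀ i, ∑ j, |A i j| ≤ R) : ‖A‖ ≤ R := by
  lift R to NNReal using hR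
  rw [linfty_opNorm_def, NNReal.coe_le_coe]
  refine Finset.sup_le fun i _ => ?_
  simpa [← NNReal.coe_le_coe] using h i

theorem abs_dotProduct_rpow_le (v x : κ → ℝ) {p : ℝ} (hp : 1 ≤ p) :
    |v ⬝ᵥ x| ^ p ≤ (∑ j, |v j|) ^ (p - 1) * ∑ j, |v j| * |x j| ^ p := by
  have hW : 0 ≤ ∑ j, |v j| := by positivity
  have hT : 0 ≤ ∑ j, |v j| * |x j| ^ p := by positivity
  calc |v ⬝ᵥ x| ^ p ≤ (∑ j, |v j| * |x j|) ^ p := by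
        gcongr
        simpa only [dotProduct, abs_mul] using Finset.abs_sum_le_sum_abs (fun j => v j * x j) _
    _ ≤ ((∑ j, |v j|) ^ (1 - p⁻¹) * (∑ j, |v j| * |x j| ^ p) ^ p⁻¹) ^ p := by
        gcongr
        exact Real.inner_le_weight_mul_Lp_of_nonneg _ hp _ _ (fun _ => abs_nonneg _)
          (fun _ => abs_nonneg _)
    _ = (∑ j, |v j|) ^ (p - 1) * ∑ j, |v j| * |x j| ^ p := by
        rw [Real.mul_rpow (by positivity) (by positivity), ← Real.rpow_mul hW,
          ← Real.rpow_mul hT, one_sub_mul, inv_mul_cancel₀ (by positivity), Real.rpow_one]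

theorem sum_abs_mulVec_rpow_le (M : Matrix ι κ ℝ) (x : κ → ℝ) {p : ℝ} (hp : 1 ≤ p) :
    ∑ i, |(M *ᵥ x) i| ^ p ≤ ‖M‖ ^ (p - 1) * ‖Mᵀ‖ * ∑ j, |x j| ^ p := by
  calc ∑ i, |(M *ᵥ x) i| ^ p
      ≤ ∑ i, ‖M‖ ^ (p - 1) * ∑ j, |M i j| * |x j| ^ p := by
        gcongr with i
        refine (abs_dotProduct_rpow_le (M i) x hp).trans ?_
        gcongr
        exact sum_abs_le_linfty_opNorm M i
    _ = ‖M‖ ^ (p - 1) * ∑ j, (∑ i, |Mᵀ j i|) * |x j| ^ p := by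
        simp only [← Finset.mul_sum, Finset.sum_mul, transpose_apply]
        rw [Finset.sum_comm]
    _ ≤ ‖M‖ ^ (p - 1) * ∑ j, ‖Mᵀ‖ * |x j| ^ p := by
        gcongr with j
        exact sum_abs_le_linfty_opNorm Mᵀ j
    _ = ‖M‖ ^ (p - 1) * ‖Mᵀ‖ * ∑ j, |x j| ^ p := by rw [← Finset.mul_sum, mul_assoc]

theorem pnorm_nonneg (p : ℝ) (x : ι → ℝ) : 0 ≤ pnorm p x := by
  unfold pnorm
  positivity

theorem pnorm_mulVec_le {M : Matrix ι κ ℝ} {R : ℝ} (hM : ‖M‖ ≤ R) (hMt : ‖Mᵀ‖ ≤ R)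
    {p : ℝ} (hp : 1 ≤ p) (x : κ → ℝ) : pnorm p (M *ᵥ x) ≤ R * pnorm p x := by
  have hR : 0 ≤ R := (norm_nonneg _).trans hM
  have hRp : ‖M‖ ^ (p - 1) * ‖Mᵀ‖ ≤ R ^ p :=
    calc ‖M‖ ^ (p - 1) * ‖Mᵀ‖ ≤ R ^ (p - 1) * R := by gcongr
      _ = R ^ p := by rw [← Real.rpow_add_one' hR (by linarith), sub_add_cancel]
  calc pnorm p (M *ᵥ x) ≤ (R ^ p * ∑ j, |x j| ^ p) ^ (1 / p) := by
        unfold pnorm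
        gcongr
        exact (sum_abs_mulVec_rpow_le M x hp).trans (by gcongr)
    _ = R * pnorm p x := by
        rw [pnorm, Real.mul_rpow (by positivity) (by positivity), ← Real.rpow_mul hR,
          mul_one_div_cancel (by linarith), Real.rpow_one]

theorem opNorm_le_of_linfty_opNorm_le {M : Matrix ι κ ℝ} {R : ℝ} (hM : ‖M‖ ≤ R)
    (hMt : ‖Mᵀ‖ ≤ R) {p : ℝ} (hp : 1 ≤ p) : opNorm p M ≤ R := by
  refine Real.sSup_le ?_ ((norm_nonneg _).trans hM)
  rintro t ⟨x, -, rfl⟩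
  exact div_le_of_le_mul₀ (pnorm_nonneg p x) ((norm_nonneg _).trans hM)
    (pnorm_mulVec_le hM hMt hp x)

end SchurTest

theorem completeInc_apply (n : ℕ) (e : {e : Fin n × Fin n // e.1 < e.2}) (k : Fin n) :
    completeInc n e k = (if k = e.1.1 then 1 else 0) - (if k = e.1.2 then 1 else 0) := by
  have := e.2.ne
  unfold completeInc
  split_ifs <;> simp_all

theorem sum_completeInc (n : ℕ) (e : {e : Fin n × Fin n // e.1 < e.2}) :
    ∑ k, completeInc n e k = 0 := by
  simp [completeInc_apply, Finset.sum_sub_distrib]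

theorem transpose_completeInc_mul_completeInc (n : ℕ) :
    (completeInc n)ᵀ * completeInc n = (n : ℝ) • 1 - of fun _ _ => 1 := by
  ext j k
  -- the edge sum is half the sum of the same symmetric summand over all ordered pairs
  have key := two_nsmul_sum_lt_eq_sum (fun a b : Fin n =>
    ((if j = a then (1:ℝ) else 0) - if j = b then 1 else 0) *
      ((if k = a then 1 else 0) - if k = b then 1 else 0)) (fun a b => by ring) (fun a => by ring)
  rw [sum_sum_sub_mul_sub] at key
  simp only [mul_apply, transpose_apply, completeInc_apply]
  simpa [one_apply] using key

theorem completeInc_mul_transpose_mul_self (n : ℕ) :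
    completeInc n * ((completeInc n)ᵀ * completeInc n) = (n : ℝ) • completeInc n := by
  have hJ : completeInc n * (of fun _ _ => (1 : ℝ) : Matrix (Fin n) (Fin n) ℝ) = 0 := by
    ext e k
    simp [mul_apply, sum_completeInc]
  rw [transpose_completeInc_mul_completeInc, Matrix.mul_sub, hJ, sub_zero, Matrix.mul_smul,
    Matrix.mul_one]

theorem completeInc_mul_eq_of_isMoorePenrose {n : ℕ} (hn : 0 < n)
    {Cp : Matrix (Fin n) {e : Fin n × Fin n // e.1 < e.2} ℝ}
    (hCp : IsMoorePenrose (completeInc n) Cp) :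
    completeInc n * Cp = (n : ℝ)⁻¹ • (completeInc n * (completeInc n)ᵀ) := by
  have hn' : (n : ℝ) ≠ 0 := by positivity
  refine hCp.mul_eq_of_isSymm ((isSymm_mul_transpose _).smul _)
    ?_ (X := (n : ℝ)⁻¹ • (completeInc n)ᵀ) (Matrix.mul_smul _ _ _).symm
  rw [Matrix.smul_mul, Matrix.mul_assoc, completeInc_mul_transpose_mul_self, smul_smul,
    inv_mul_cancel₀ hn', one_smul]

theorem sum_abs_completeInc_row (n : ℕ) (e : {e : Fin n × Fin n // e.1 < e.2}) :
    ∑ k, |completeInc n e k| = 2 := by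
  have habs : ∀ k, |completeInc n e k| =
      (if k = e.1.1 then 1 else 0) + (if k = e.1.2 then 1 else 0) := by
    intro k
    have := e.2.ne
    unfold completeInc
    split_ifs <;> simp_all
  simp only [habs, Finset.sum_add_distrib, Finset.sum_ite_eq', Finset.mem_univ, if_true]
  norm_num

theorem sum_abs_completeInc_col (n : ℕ) (k : Fin n) :
    ∑ e, |completeInc n e k| = n - 1 := by
  -- entries lie in `{0, 1, -1}`, so the column `ℓ¹`-norm is the diagonal entry of `CᵀC`
  have habs : ∀ e, |completeInc n e k| = completeInc n e k * completeInc n e k := by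
    intro e
    unfold completeInc
    split_ifs <;> norm_num
  have := congrFun₂ (transpose_completeInc_mul_completeInc n) k k
  simp only [mul_apply, transpose_apply] at this
  simp [habs, this]

theorem linfty_opNorm_completeInc_mul_transpose_le (n : ℕ) :
    ‖(n : ℝ)⁻¹ • (completeInc n * (completeInc n)ᵀ)‖ ≤ 2 := by
  have hC : ‖completeInc n‖ ≤ 2 :=
    linfty_opNorm_le_of_sum_abs_le zero_le_two fun e => (sum_abs_completeInc_row n e).le
  have hCt : ‖(completeInc n)ᵀ‖ ≤ n :=
    linfty_opNorm_le_of_sum_abs_le n.cast_nonneg fun k => by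
      simp only [transpose_apply, sum_abs_completeInc_col]
      linarith
  calc ‖(n : ℝ)⁻¹ • (completeInc n * (completeInc n)ᵀ)‖
      ≤ ‖(n : ℝ)⁻¹‖ * (‖completeInc n‖ * ‖(completeInc n)ᵀ‖) :=
        (norm_smul_le _ _).trans (by gcongr; exact linfty_opNorm_mul _ _)
    _ ≤ (n : ℝ)⁻¹ * (2 * n) := by
        rw [norm_inv, Real.norm_natCast]
        gcongr
    _ ≤ 2 := by
        rcases eq_or_ne (n : ℝ) 0 with h | h
        · simp [h]
        · rw [mul_left_comm, inv_mul_cancel₀ h, mul_one]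

/-- For the complete graph `K_n` with incidence matrix `C`, the operator `p`-norm
of `CC⁺` satisfies `⦀CC⁺⦀_p ≤ 4` for every `p ≥ 1`. -/
theorem completeGraph_opNorm_proj_le_four (n : ℕ) (hn : 0 < n)
    (Cp : Matrix (Fin n) {e : Fin n × Fin n // e.1 < e.2} ℝ)
    (hCp : IsMoorePenrose (completeInc n) Cp) (p : ℝ) (hp : 1 ≤ p) :
    opNorm p (completeInc n * Cp) ≤ 4 := by
  rw [completeInc_mul_eq_of_isMoorePenrose hn hCp]
  have hQ := linfty_opNorm_completeInc_mul_transpose_le n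
  have hQt : ‖((n : ℝ)⁻¹ • (completeInc n * (completeInc n)ᵀ))ᵀ‖ ≤ 2 := by
    rwa [((isSymm_mul_transpose _).smul _).eq]
  exact (opNorm_le_of_linfty_opNorm_le hQ hQt hp).trans (by norm_num)
end
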